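/- Let G = (V, E) be a finite simple graph whose vertex set is partitioned into nonempty sets A and B with |B| = N_B even, let |G⟩ be the associated graph state, let G_B be the partial trace over the A qubits of |G⟩⟨G|, and let G̃_B = σ_y^{⊗N_B} G_B* σ_y^{⊗N_B}. Let Γ_BA be the N_B × N_A block of the adjacency matrix of G over F₂ recording edges between B and A, and let D ∈ F₂^B be the vector with D_b = 1 if and only if b has even degree in the induced subgraph G − A on B. Then F(G_B, G̃_B) = 1 if the equation Γ_BA x = D has a solution x ∈ F₂^A (arithmetic modulo 2), and F(G_B, G̃_B) = 0 otherwise. -/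

import Mathlib

/-!
Up to normalization the amplitudes of `|G⟩` are `(-1)^{q(x)}` for the quadratic form
`q(x) = ∑_{uv ∈ E} x_u x_v` over `𝔽₂`, whose polarization is the adjacency matrix. Writing
`x = (a, c)` with `a` on `B` and `c` on `A`, the cross term of `q` is `a ⬝ Γ_BA c`, so the partial
trace over `A` is a character sum:
`G_B(a, b) = 2^{N_A - N} (-1)^{q(a) + q(b)} [Γ_BAᵀ (a + b) = 0]`.
Conjugation by `σ_y^{⊗N_B}` flips every bit of `B`, which changes `q` by the degrees inside `B`;
with the phases of `σ_y` the entry `(a, b)` gets multiplied by `(-1)^{D ⬝ (a + b)}`.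
If `D = Γ_BA x`, then `D ⬝ d = x ⬝ Γ_BAᵀ d` vanishes on `ker Γ_BAᵀ`, so `G̃_B = G_B` and
`F = tr G_B = 1`. Otherwise `d ↦ (-1)^{D ⬝ d}` is a nontrivial character of `ker Γ_BAᵀ`, whence
`tr (G_B G̃_B) = 0`; then `√G_B G̃_B √G_B` is positive semidefinite of trace zero, hence zero,
and `F = 0`.
-/

open scoped BigOperators ComplexConjugate ComplexOrder

noncomputable section

namespace QIpaper

/-- Inner product `⟨ψ|φ⟩`, conjugate-linear in the first argument. -/
def braket {I : Type*} [Fintype I] (ψ φ : I → ℂ) : ℂ := ∑ x, conj (ψ x) * φ x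

/-- Outer product `|ψ⟩⟨ψ|`. -/
def dm {I : Type*} (ψ : I → ℂ) : Matrix I I ℂ := Matrix.of fun x y => ψ x * conj (ψ y)

open Classical in
/-- Positive semidefinite square root (junk value `0` on non-PSD matrices). -/
def psdSqrt {I : Type*} [Fintype I] [DecidableEq I] (A : Matrix I I ℂ) : Matrix I I ℂ :=
  if h : A.PosSemidef then h.1.eigenvectorUnitary.1 *
    Matrix.diagonal ((↑) ∘ Real.sqrt ∘ h.1.eigenvalues) *
    (star h.1.eigenvectorUnitary : Matrix I I ℂ) else 0

/-- The trace norm `‖A‖₁ = tr √(AᴴA)`. -/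
def traceNorm {I : Type*} [Fintype I] [DecidableEq I] (A : Matrix I I ℂ) : ℝ :=
  (psdSqrt (A.conjTranspose * A)).trace.re

/-- Fidelity `F(ρ,σ) = tr √(√ρ σ √ρ)`. -/
def fidelity {I : Type*} [Fintype I] [DecidableEq I] (ρ σ : Matrix I I ℂ) : ℝ :=
  (psdSqrt (psdSqrt ρ * σ * psdSqrt ρ)).trace.re

/-- Purity `tr(ρ²)`. -/
def purity {I : Type*} [Fintype I] (ρ : Matrix I I ℂ) : ℝ := ((ρ * ρ).trace).re

def sigmaX : Matrix (Fin 2) (Fin 2) ℂ := !![0, 1; 1, 0]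
def sigmaY : Matrix (Fin 2) (Fin 2) ℂ := !![0, -Complex.I; Complex.I, 0]
def sigmaZ : Matrix (Fin 2) (Fin 2) ℂ := !![1, 0; 0, -1]

/-- `σ_y^{⊗I}` on the qubits indexed by `I`. -/
def sigmaYn {I : Type*} [Fintype I] [DecidableEq I] : Matrix (I → Fin 2) (I → Fin 2) ℂ :=
  Matrix.of fun x y => ∏ k, sigmaY (x k) (y k)

/-- The `n`-tangle `τ(ψ) = |⟨ψ|σ_y^{⊗n}|ψ*⟩|`. -/
def tangle {I : Type*} [Fintype I] [DecidableEq I] (ψ : (I → Fin 2) → ℂ) : ℝ :=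
  ‖(∑ x, ∑ y, conj (ψ x) * sigmaYn x y * conj (ψ y))‖

/-- Entrywise complex conjugate of a matrix. -/
def conjM {I J : Type*} (ρ : Matrix I J ℂ) : Matrix I J ℂ := Matrix.of fun x y => conj (ρ x y)

/-- `ρ̃ = σ_y^{⊗n} ρ* σ_y^{⊗n}`. -/
def tildeM {I : Type*} [Fintype I] [DecidableEq I] (ρ : Matrix (I → Fin 2) (I → Fin 2) ℂ) :
    Matrix (I → Fin 2) (I → Fin 2) ℂ := sigmaYn * conjM ρ * sigmaYn

/-- The Wootters tilde `|ψ̃⟩ = σ_y^{⊗n}|ψ*⟩`. -/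
def wtilde {I : Type*} [Fintype I] [DecidableEq I] (ψ : (I → Fin 2) → ℂ) : (I → Fin 2) → ℂ :=
  sigmaYn.mulVec (fun x => conj (ψ x))

/-- Reduced density matrix of the pure state `ψ` on the qubits in `s`
(tracing out the complement). -/
def reduced {n : ℕ} (s : Finset (Fin n)) (ψ : (Fin n → Fin 2) → ℂ) :
    Matrix ({i : Fin n // i ∈ s} → Fin 2) ({i : Fin n // i ∈ s} → Fin 2) ℂ :=
  Matrix.of fun a b => ∑ c : {i : Fin n // i ∉ s} → Fin 2,
    ψ (fun i => if h : i ∈ s then a ⟨i, h⟩ else c ⟨i, h⟩) *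
    conj (ψ (fun i => if h : i ∈ s then b ⟨i, h⟩ else c ⟨i, h⟩))

/-- GME-concurrence `C_GME(ψ) = min_{∅ ⊊ γ ⊊ [n]} √(2(1 − tr ψ_γ²))`. -/
def gme {n : ℕ} (ψ : (Fin n → Fin 2) → ℂ) : ℝ :=
  sInf {r : ℝ | ∃ γ : Finset (Fin n), γ ≠ ∅ ∧ γ ≠ Finset.univ ∧
    r = Real.sqrt (2 * (1 - purity (reduced γ ψ)))}

/-- Concentratable entanglement `C(ψ; s) = 1 − 2^{−|s|} Σ_{γ⊆s} tr(ψ_γ²)`. -/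
def CE {n : ℕ} (ψ : (Fin n → Fin 2) → ℂ) (s : Finset (Fin n)) : ℝ :=
  1 - (1 / 2 ^ s.card) * ∑ γ ∈ s.powerset, purity (reduced γ ψ)

/-- The subnormalized post-measurement vector `(⟨v|⊗I)|Ψ⟩`. -/
def contract {IA IB : Type*} [Fintype IA] (v : IA → ℂ) (Ψ : IA × IB → ℂ) : IB → ℂ :=
  fun y => ∑ x, conj (v x) * Ψ (x, y)

/-- Probability `p_v = ⟨Ψ|(|v⟩⟨v| ⊗ I)|Ψ⟩` of outcome `v`. -/
def prob {IA IB : Type*} [Fintype IA] [Fintype IB] (v : IA → ℂ) (Ψ : IA × IB → ℂ) : ℝ :=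
  (braket (contract v Ψ) (contract v Ψ)).re

/-- Normalized post-measurement state (the zero vector when the probability vanishes). -/
def postState {IA IB : Type*} [Fintype IA] [Fintype IB] (v : IA → ℂ) (Ψ : IA × IB → ℂ) :
    IB → ℂ := fun y => ((Real.sqrt (prob v Ψ) : ℂ))⁻¹ * contract v Ψ y

/-- `b` is an orthonormal family. (An orthonormal family indexed by the space's own
index type is an orthonormal basis.) -/
def ONB {J I : Type*} [Fintype I] [DecidableEq J] (b : J → I → ℂ) : Prop :=
  ∀ i j, braket (b i) (b j) = if i = j then 1 else 0

/-- Average post-measurement entanglement `Ē_β(Ψ) = Σ_i p_i E(φ_i)`. -/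
def avgE {ι IA IB : Type*} [Fintype ι] [Fintype IA] [Fintype IB]
    (E : (IB → ℂ) → ℝ) (b : ι → IA → ℂ) (Ψ : IA × IB → ℂ) : ℝ :=
  ∑ i, prob (b i) Ψ * E (postState (b i) Ψ)

/-- Multipartite entanglement of assistance: supremum of `Ē_β` over all
orthonormal bases `β` of `H_A`. -/
def Lglobal {IA IB : Type*} [Fintype IA] [Fintype IB] [DecidableEq IA]
    (E : (IB → ℂ) → ℝ) (Ψ : IA × IB → ℂ) : ℝ :=
  sSup {r : ℝ | ∃ b : IA → IA → ℂ, ONB b ∧ r = avgE E b Ψ}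

/-- Tensor-product basis of `(ℂ²)^{⊗K}` built from single-qubit bases. -/
def productBasis {K : Type*} [Fintype K] (q : K → Fin 2 → Fin 2 → ℂ) :
    (K → Fin 2) → (K → Fin 2) → ℂ :=
  fun i x => ∏ k, q k (i k) (x k)

/-- Localizable multipartite entanglement: supremum of `Ē_β` over product bases of
single-qubit orthonormal bases of `H_A = (ℂ²)^{⊗K}`. -/
def Lloc {K IB : Type*} [Fintype K] [DecidableEq K] [Fintype IB]
    (E : (IB → ℂ) → ℝ) (Ψ : (K → Fin 2) × IB → ℂ) : ℝ :=
  sSup {r : ℝ | ∃ q : K → Fin 2 → Fin 2 → ℂ, (∀ k, ONB (q k)) ∧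
    r = avgE E (productBasis q) Ψ}

/-- Partial trace over the `A` system of `|Ψ⟩⟨Ψ|`. -/
def ptraceA {IA IB : Type*} [Fintype IA] (Ψ : IA × IB → ℂ) : Matrix IB IB ℂ :=
  Matrix.of fun y y' => ∑ x, Ψ (x, y) * conj (Ψ (x, y'))

/-- Reduced density matrix of `|Ψ⟩⟨Ψ|` on the subset `s` of the `B` qubits. -/
def reducedB {IA : Type*} [Fintype IA] {n : ℕ} (s : Finset (Fin n))
    (Ψ : IA × (Fin n → Fin 2) → ℂ) :
    Matrix ({i : Fin n // i ∈ s} → Fin 2) ({i : Fin n // i ∈ s} → Fin 2) ℂ :=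
  Matrix.of fun a b => ∑ x : IA, ∑ c : {i : Fin n // i ∉ s} → Fin 2,
    Ψ (x, fun i => if h : i ∈ s then a ⟨i, h⟩ else c ⟨i, h⟩) *
    conj (Ψ (x, fun i => if h : i ∈ s then b ⟨i, h⟩ else c ⟨i, h⟩))


/-- The `±1` sign contributed by a controlled-Z gate on the (unordered) pair `e` of qubits,
evaluated at the computational basis state `x`. -/
def czSign {n : ℕ} (x : Fin n → Fin 2) : Sym2 (Fin n) → ℂ :=
  Sym2.lift ⟨fun a b => if x a = 1 ∧ x b = 1 then (-1 : ℂ) else 1, by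
    intro a b; simp [and_comm]⟩

/-- The graph state `|G⟩ = (Π_{{a,b}∈E} CZ_{ab}) |+⟩^{⊗n}` of a simple graph `G` on `n`
vertices, written out in the computational basis. -/
def graphState {n : ℕ} (G : SimpleGraph (Fin n)) [DecidableRel G.Adj] :
    (Fin n → Fin 2) → ℂ :=
  fun x => (Real.sqrt (2 ^ n) : ℂ)⁻¹ * ∏ e ∈ G.edgeFinset, czSign x e

open Fin.CommRing Matrix

section Fidelity

variable {I : Type*} [Fintype I] [DecidableEq I]

open scoped MatrixOrder

lemma psdSqrt_eq_sqrt {A : Matrix I I ℂ} (hA : A.PosSemidef) : psdSqrt A = CFC.sqrt A := by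
  rw [psdSqrt, dif_pos hA, CFC.sqrt_eq_cfc, cfc_nnreal_eq_real _ A hA.nonneg, hA.1.cfc_eq,
    IsHermitian.cfc, Unitary.conjStarAlgAut_apply]
  congr 2
  refine congrArg diagonal (funext fun i => ?_)
  simp [Real.coe_sqrt, max_eq_left (hA.eigenvalues_nonneg i)]

lemma fidelity_self {ρ : Matrix I I ℂ} (hρ : ρ.PosSemidef) : fidelity ρ ρ = ρ.trace.re := by
  have hsq : CFC.sqrt ρ * CFC.sqrt ρ = ρ := CFC.sqrt_mul_sqrt_self ρ hρ.nonneg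
  have hρρ : (ρ * ρ).PosSemidef := by
    simpa only [hρ.1.eq] using posSemidef_conjTranspose_mul_self ρ
  have hmid : psdSqrt ρ * ρ * psdSqrt ρ = ρ * ρ := by
    rw [psdSqrt_eq_sqrt hρ]
    set S := CFC.sqrt ρ
    rw [← hsq, Matrix.mul_assoc, Matrix.mul_assoc, Matrix.mul_assoc]
  rw [fidelity, hmid, psdSqrt_eq_sqrt hρρ, CFC.sqrt_mul_self ρ hρ.nonneg]

lemma fidelity_eq_zero_of_trace_mul_eq_zero {ρ σ : Matrix I I ℂ} (hρ : ρ.PosSemidef)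
    (h : (ρ * σ).trace = 0) : fidelity ρ σ = 0 := by
  by_cases hM : (psdSqrt ρ * σ * psdSqrt ρ).PosSemidef
  · have htr : (psdSqrt ρ * σ * psdSqrt ρ).trace = 0 := by
      rw [psdSqrt_eq_sqrt hρ, trace_mul_comm, ← Matrix.mul_assoc,
        CFC.sqrt_mul_sqrt_self ρ hρ.nonneg, h]
    rw [fidelity, hM.trace_eq_zero_iff.mp htr, psdSqrt_eq_sqrt PosSemidef.zero, CFC.sqrt_zero]
    simp
  · rw [fidelity, psdSqrt, dif_neg hM]
    simp

end Fidelity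

def parityChar (t : Fin 2) : ℂ := if t = 0 then 1 else -1

@[simp] lemma parityChar_zero : parityChar 0 = 1 := rfl

lemma parityChar_add (s t : Fin 2) : parityChar (s + t) = parityChar s * parityChar t := by
  fin_cases s <;> fin_cases t <;> simp [parityChar]

lemma parityChar_mul_self (t : Fin 2) : parityChar t * parityChar t = 1 := by
  rw [← parityChar_add, CharTwo.add_self_eq_zero, parityChar_zero]

@[simp] lemma conj_parityChar (t : Fin 2) : conj (parityChar t) = parityChar t := by
  fin_cases t <;> simp [parityChar]

lemma parityChar_sum {ι : Type*} (s : Finset ι) (f : ι → Fin 2) :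
    parityChar (∑ i ∈ s, f i) = ∏ i ∈ s, parityChar (f i) := by
  induction s using Finset.cons_induction with
  | empty => rfl
  | cons a s ha ih => rw [Finset.sum_cons, Finset.prod_cons, parityChar_add, ih]

lemma sum_parityChar_dotProduct {J : Type*} [Fintype J] [DecidableEq J] (t : J → Fin 2) :
    ∑ z : J → Fin 2, parityChar (z ⬝ᵥ t) = if t = 0 then 2 ^ Fintype.card J else 0 := by
  have hfactor (s : Fin 2) : ∑ x : Fin 2, parityChar (x * s) = if s = 0 then 2 else 0 := by
    fin_cases s <;> simp [parityChar]
  simp_rw [dotProduct, parityChar_sum]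
  rw [← Fintype.prod_sum fun j (s : Fin 2) => parityChar (s * t j)]
  simp_rw [hfactor]
  rw [Finset.prod_ite_zero]
  simp [funext_iff]

lemma sum_parityChar_mul_ker_eq_zero {m n : Type*} [Fintype m] [DecidableEq m] [Fintype n]
    [DecidableEq n] (M : Matrix m n (Fin 2)) (D : n → Fin 2) (h : ¬∃ z, z ᵥ* M = D) :
    ∑ d, parityChar (d ⬝ᵥ D) * (if M *ᵥ d = 0 then 1 else 0) = 0 := by
  have hker (d : n → Fin 2) : (if M *ᵥ d = 0 then 1 else 0) =
      (2 ^ Fintype.card m : ℂ)⁻¹ * ∑ z, parityChar (z ⬝ᵥ M *ᵥ d) := by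
    rw [sum_parityChar_dotProduct]
    split_ifs
    · exact (inv_mul_cancel₀ (by positivity)).symm
    · rw [mul_zero]
  have hshift (z : m → Fin 2) (d : n → Fin 2) :
      d ⬝ᵥ D + z ⬝ᵥ M *ᵥ d = d ⬝ᵥ (D + z ᵥ* M) := by
    rw [dotProduct_add, dotProduct_mulVec, dotProduct_comm (z ᵥ* M)]
  have hne (z : m → Fin 2) : D + z ᵥ* M ≠ 0 := fun h0 =>
    h ⟨z, funext fun k => (CharTwo.add_eq_zero.mp (congrFun h0 k)).symm⟩
  simp_rw [hker, Finset.mul_sum, mul_left_comm, ← parityChar_add, hshift]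
  rw [Finset.sum_comm]
  refine Finset.sum_eq_zero fun z _ => ?_
  rw [← Finset.mul_sum, sum_parityChar_dotProduct, if_neg (hne z), mul_zero]

section QuadForm

variable {V R : Type*} [Fintype V] [DecidableEq V] [CommSemiring R]
  (G : SimpleGraph V) [DecidableRel G.Adj]

lemma sum_adj_eq_sum_edgeFinset {M : Type*} [AddCommMonoid M] (f : V → V → M) :
    ∑ u, ∑ v, (if G.Adj u v then f u v else 0) =
      ∑ e ∈ G.edgeFinset, Sym2.lift ⟨fun u v => f u v + f v u, fun _ _ => add_comm _ _⟩ e := by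
  have hdart : ∑ u, ∑ v, (if G.Adj u v then f u v else 0) = ∑ d : G.Dart, f d.fst d.snd := by
    rw [← Fintype.sum_prod_type', ← Finset.sum_filter]
    exact Finset.sum_bij' (fun p hp => ⟨p, (Finset.mem_filter.1 hp).2⟩) (fun d _ => d.toProd)
      (by simp) (by simp) (by simp) (by simp) (by simp)
  rw [hdart, ← Finset.sum_fiberwise_of_maps_to (g := SimpleGraph.Dart.edge) (t := G.edgeFinset)
    fun d _ => G.mem_edgeFinset.2 d.edge_mem]
  refine Finset.sum_congr rfl fun e he => ?_
  obtain ⟨u, v⟩ := e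
  let d : G.Dart := ⟨(u, v), G.mem_edgeFinset.1 he⟩
  change ∑ d' ∈ Finset.univ with (d' : G.Dart).edge = d.edge, _ = _
  rw [d.edge_fiber, Finset.sum_pair d.symm_ne.symm]
  rfl

def quadForm (x : V → R) : R :=
  ∑ e ∈ G.edgeFinset, Sym2.lift ⟨fun u v => x u * x v, fun _ _ => mul_comm _ _⟩ e

lemma quadForm_add (x y : V → R) :
    quadForm G (x + y) = quadForm G x + quadForm G y + x ⬝ᵥ G.adjMatrix R *ᵥ y := by
  rw [SimpleGraph.dotProduct_mulVec_adjMatrix, sum_adj_eq_sum_edgeFinset, quadForm, quadForm,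
    quadForm, ← Finset.sum_add_distrib, ← Finset.sum_add_distrib]
  refine Finset.sum_congr rfl fun e _ => ?_
  induction e using Sym2.ind
  simp only [Sym2.lift_mk, Pi.add_apply]
  ring

end QuadForm

section Glue

variable {V α : Type*} [DecidableEq V] (s : Finset V)

def glue (a : {i // i ∈ s} → α) (c : {i // i ∉ s} → α) : V → α :=
  (Equiv.piEquivPiSubtypeProd (· ∈ s) fun _ => α).symm (a, c)

variable {s}

@[simp] lemma glue_apply_mem (a : {i // i ∈ s} → α) (c : {i // i ∉ s} → α) (i : {i // i ∈ s}) :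
    glue s a c i = a i := by
  simp [glue]

@[simp] lemma glue_apply_notMem (a : {i // i ∈ s} → α) (c : {i // i ∉ s} → α)
    (i : {i // i ∉ s}) : glue s a c i = c i := by
  simp [glue, i.2]

lemma glue_add [Add α] (a a' : {i // i ∈ s} → α) (c c' : {i // i ∉ s} → α) :
    glue s (a + a') (c + c') = glue s a c + glue s a' c' := by
  funext i
  by_cases hi : i ∈ s <;> simp [glue, hi]

lemma dotProduct_mulVec_glue [Fintype V] {R : Type*} [CommSemiring R] (M : Matrix V V R)
    (a a' : {i // i ∈ s} → R) (c c' : {i // i ∉ s} → R) :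
    glue s a c ⬝ᵥ M *ᵥ glue s a' c' =
      a ⬝ᵥ M.submatrix (↑) (↑) *ᵥ a' + a ⬝ᵥ M.submatrix (↑) (↑) *ᵥ c' +
        (c ⬝ᵥ M.submatrix (↑) (↑) *ᵥ a' + c ⬝ᵥ M.submatrix (↑) (↑) *ᵥ c') := by
  simp only [dotProduct, mulVec, ← Fintype.sum_subtype_add_sum_subtype (· ∈ s),
    glue_apply_mem, glue_apply_notMem, submatrix_apply, mul_add, Finset.sum_add_distrib]
  -- the two sides differ only in the `Fintype` instance on `↥s`
  congr!

end Glue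

section Reduced

variable {N : ℕ} (s : Finset (Fin N)) (ψ : (Fin N → Fin 2) → ℂ)

lemma reduced_apply (a b : {i // i ∈ s} → Fin 2) :
    reduced s ψ a b = ∑ c, ψ (glue s a c) * conj (ψ (glue s b c)) := rfl

lemma posSemidef_reduced : (reduced s ψ).PosSemidef := by
  have : reduced s ψ = (of fun a c => ψ (glue s a c)) * (of fun a c => ψ (glue s a c))ᴴ := by
    ext a b
    simp [reduced_apply, mul_apply]
  rw [this]
  exact posSemidef_self_mul_conjTranspose _

lemma trace_reduced : (reduced s ψ).trace = braket ψ ψ := by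
  rw [braket, ← (Equiv.piEquivPiSubtypeProd (· ∈ s) fun _ => Fin 2).symm.sum_comp,
    Fintype.sum_prod_type]
  simp only [trace, diag_apply, reduced_apply, mul_comm]
  rfl

end Reduced

section SigmaY

variable {κ : Type*} [Fintype κ] [DecidableEq κ]

lemma sigmaY_apply (s t : Fin 2) :
    sigmaY s t = if t = s + 1 then -Complex.I * parityChar s else 0 := by
  fin_cases s <;> fin_cases t <;> simp [sigmaY, parityChar]

lemma sigmaYn_apply (x y : κ → Fin 2) :
    sigmaYn x y = if y = x + 1 then ∏ k, -Complex.I * parityChar (x k) else 0 := by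
  simp only [sigmaYn, of_apply, sigmaY_apply, Finset.prod_ite_zero, funext_iff, Pi.add_apply,
    Pi.one_apply, Finset.mem_univ, true_implies]

lemma tildeM_apply (ρ : Matrix (κ → Fin 2) (κ → Fin 2) ℂ) (a b : κ → Fin 2) :
    tildeM ρ a b = parityChar (∑ k, (a k + b k)) * conj (ρ (a + 1) (b + 1)) := by
  have hflip (y : κ → Fin 2) : (b = y + 1) = (y = b + 1) := by
    refine propext ⟨fun h => ?_, fun h => ?_⟩ <;> subst h <;> funext k <;> simp [add_assoc]
  simp only [tildeM, mul_apply, sigmaYn_apply, hflip, ite_mul, mul_ite, zero_mul, mul_zero,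
    Finset.sum_ite_eq', Finset.mem_univ, if_true, conjM, of_apply]
  have hk (s t : Fin 2) :
      -Complex.I * parityChar s * (-Complex.I * parityChar (t + 1)) = parityChar (s + t) := by
    fin_cases s <;> fin_cases t <;> simp [parityChar]
  rw [mul_right_comm, ← Finset.prod_mul_distrib, parityChar_sum]
  simp only [Pi.add_apply, Pi.one_apply, hk]

end SigmaY

section GraphState

variable {N : ℕ} (G : SimpleGraph (Fin N)) [DecidableRel G.Adj]

lemma czSign_eq (x : Fin N → Fin 2) (e : Sym2 (Fin N)) :
    czSign x e = parityChar (Sym2.lift ⟨fun u v => x u * x v, fun _ _ => mul_comm _ _⟩ e) := by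
  induction e using Sym2.ind with
  | _ u v =>
    simp only [czSign, Sym2.lift_mk]
    generalize x u = s
    generalize x v = t
    fin_cases s <;> fin_cases t <;> simp [parityChar]

lemma graphState_apply (x : Fin N → Fin 2) :
    graphState G x = (Real.sqrt (2 ^ N) : ℂ)⁻¹ * parityChar (quadForm G x) := by
  simp only [graphState, czSign_eq, quadForm, parityChar_sum]

lemma graphState_mul_conj (x y : Fin N → Fin 2) :
    graphState G x * conj (graphState G y) =
      (2 ^ N : ℂ)⁻¹ * parityChar (quadForm G x + quadForm G y) := by
  have hsq : (Real.sqrt (2 ^ N) : ℂ)⁻¹ * (Real.sqrt (2 ^ N) : ℂ)⁻¹ = (2 ^ N : ℂ)⁻¹ := by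
    rw [← mul_inv, ← Complex.ofReal_mul, Real.mul_self_sqrt (by positivity)]
    push_cast
    rfl
  rw [graphState_apply, graphState_apply, map_mul, map_inv₀, Complex.conj_ofReal,
    conj_parityChar, parityChar_add, ← hsq]
  ring

lemma braket_graphState_self : braket (graphState G) (graphState G) = 1 := by
  simp only [braket, mul_comm (conj _), graphState_mul_conj, CharTwo.add_self_eq_zero,
    parityChar_zero, mul_one, Finset.sum_const, Finset.card_univ, Fintype.card_fun,
    Fintype.card_fin, nsmul_eq_mul]
  push_cast
  exact mul_inv_cancel₀ (by positivity)

variable (B : Finset (Fin N))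

/-- The matrix `Γ_BA` of the statement, transposed: rows are indexed by `A = Bᶜ`. -/
def biadjMatrix : Matrix {i // i ∉ B} {i // i ∈ B} (Fin 2) :=
  (G.adjMatrix (Fin 2)).submatrix (↑) (↑)

lemma quadForm_glue_add_quadForm_glue (a b : {i // i ∈ B} → Fin 2) (c : {i // i ∉ B} → Fin 2) :
    quadForm G (glue B a c) + quadForm G (glue B b c) =
      quadForm G (glue B a 0) + quadForm G (glue B b 0) + c ⬝ᵥ biadjMatrix G B *ᵥ (a + b) := by
  have hsplit (a : {i // i ∈ B} → Fin 2) : quadForm G (glue B a c) =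
      quadForm G (glue B 0 c) + quadForm G (glue B a 0) + c ⬝ᵥ biadjMatrix G B *ᵥ a := by
    rw [← zero_add a, ← add_zero c, glue_add, zero_add, add_zero, quadForm_add,
      dotProduct_mulVec_glue]
    simp [biadjMatrix]
  rw [hsplit a, hsplit b, mulVec_add, dotProduct_add]
  linear_combination CharTwo.add_self_eq_zero (quadForm G (glue B 0 c))

lemma reduced_graphState_apply (a b : {i // i ∈ B} → Fin 2) :
    reduced B (graphState G) a b =
      (2 ^ N : ℂ)⁻¹ * parityChar (quadForm G (glue B a 0)) * parityChar (quadForm G (glue B b 0)) *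
        if biadjMatrix G B *ᵥ (a + b) = 0 then 2 ^ Fintype.card {i // i ∉ B} else 0 := by
  have hterm (c : {i // i ∉ B} → Fin 2) :
      graphState G (glue B a c) * conj (graphState G (glue B b c)) =
        (2 ^ N : ℂ)⁻¹ * parityChar (quadForm G (glue B a 0)) *
          parityChar (quadForm G (glue B b 0)) * parityChar (c ⬝ᵥ biadjMatrix G B *ᵥ (a + b)) := by
    rw [graphState_mul_conj, quadForm_glue_add_quadForm_glue, parityChar_add, parityChar_add]
    ring
  rw [reduced_apply, Finset.sum_congr rfl fun c _ => hterm c, ← Finset.mul_sum,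
    sum_parityChar_dotProduct]

def inducedAdjMatrix : Matrix {i // i ∈ B} {i // i ∈ B} (Fin 2) :=
  (G.adjMatrix (Fin 2)).submatrix (↑) (↑)

def evenDegreeVec : {i // i ∈ B} → Fin 2 :=
  fun b => if Even (B.filter (fun c => G.Adj b.1 c)).card then 1 else 0

lemma evenDegreeVec_eq : evenDegreeVec G B = 1 + inducedAdjMatrix G B *ᵥ 1 := by
  funext u
  have hdeg : (inducedAdjMatrix G B *ᵥ 1) u =
      ((B.filter (fun c => G.Adj u.1 c)).card : Fin 2) := by
    simp only [inducedAdjMatrix, mulVec, dotProduct, submatrix_apply, SimpleGraph.adjMatrix_apply,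
      Pi.one_apply, mul_one]
    rw [Finset.sum_coe_sort B (fun w => if G.Adj u.1 w then (1 : Fin 2) else 0), Finset.sum_boole]
  have hpar (n : ℕ) : (if Even n then 1 else 0 : Fin 2) = 1 + n := by
    rw [CharTwo.natCast_eq_ite]
    split_ifs <;> rfl
  rw [evenDegreeVec, Pi.add_apply, hdeg, hpar, Pi.one_apply]

lemma quadForm_glue_add_one (a : {i // i ∈ B} → Fin 2) :
    quadForm G (glue B (a + 1) 0) = quadForm G (glue B a 0) + quadForm G (glue B 1 0) +
      a ⬝ᵥ inducedAdjMatrix G B *ᵥ 1 := by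
  rw [← add_zero (0 : {i // i ∉ B} → Fin 2), glue_add, add_zero, quadForm_add,
    dotProduct_mulVec_glue]
  simp [inducedAdjMatrix]

lemma tildeM_reduced_graphState (a b : {i // i ∈ B} → Fin 2) :
    tildeM (reduced B (graphState G)) a b =
      parityChar ((a + b) ⬝ᵥ evenDegreeVec G B) * reduced B (graphState G) a b := by
  have hflip : a + 1 + (b + 1) = a + b := by
    funext k
    simp only [Pi.add_apply, Pi.one_apply]
    rw [add_add_add_comm, CharTwo.add_self_eq_zero (1 : Fin 2), add_zero]
  have hsign : parityChar (quadForm G (glue B (a + 1) 0)) *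
      parityChar (quadForm G (glue B (b + 1) 0)) =
        parityChar (quadForm G (glue B a 0)) * parityChar (quadForm G (glue B b 0)) *
          parityChar ((a + b) ⬝ᵥ inducedAdjMatrix G B *ᵥ 1) := by
    rw [← parityChar_add, ← parityChar_add, ← parityChar_add, quadForm_glue_add_one,
      quadForm_glue_add_one, add_dotProduct]
    congr 1
    linear_combination CharTwo.add_self_eq_zero (quadForm G (glue B 1 0) : Fin 2)
  have hD : parityChar ((a + b) ⬝ᵥ evenDegreeVec G B) =
      parityChar (∑ k, (a k + b k)) * parityChar ((a + b) ⬝ᵥ inducedAdjMatrix G B *ᵥ 1) := by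
    rw [evenDegreeVec_eq, dotProduct_add, dotProduct_one, parityChar_add]
    rfl
  rw [tildeM_apply, reduced_graphState_apply, reduced_graphState_apply, hflip, hD]
  simp only [map_mul, map_inv₀, map_pow, conj_parityChar, apply_ite (starRingEnd ℂ), map_ofNat,
    map_zero]
  linear_combination (parityChar (∑ k, (a k + b k)) * (2 ^ N : ℂ)⁻¹ *
    if biadjMatrix G B *ᵥ (a + b) = 0 then (2 : ℂ) ^ Fintype.card {i // i ∉ B} else 0) * hsign

end GraphState

section Criterion

variable {N : ℕ} (G : SimpleGraph (Fin N)) [DecidableRel G.Adj] (B : Finset (Fin N))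

lemma tildeM_reduced_graphState_eq_self
    (h : ∃ z, z ᵥ* biadjMatrix G B = evenDegreeVec G B) :
    tildeM (reduced B (graphState G)) = reduced B (graphState G) := by
  obtain ⟨z, hz⟩ := h
  ext a b
  rw [tildeM_reduced_graphState]
  by_cases hker : biadjMatrix G B *ᵥ (a + b) = 0
  · rw [← hz, dotProduct_comm, ← dotProduct_mulVec, hker, dotProduct_zero, parityChar_zero,
      one_mul]
  · rw [reduced_graphState_apply, if_neg hker, mul_zero, mul_zero]

lemma trace_mul_tildeM_reduced_graphState
    (h : ¬∃ z, z ᵥ* biadjMatrix G B = evenDegreeVec G B) :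
    (reduced B (graphState G) * tildeM (reduced B (graphState G))).trace = 0 := by
  have hterm (a b : {i // i ∈ B} → Fin 2) :
      reduced B (graphState G) a b * tildeM (reduced B (graphState G)) b a =
        ((2 ^ N : ℂ)⁻¹ * 2 ^ Fintype.card {i // i ∉ B}) ^ 2 *
          (parityChar ((a + b) ⬝ᵥ evenDegreeVec G B) *
            if biadjMatrix G B *ᵥ (a + b) = 0 then 1 else 0) := by
    rw [tildeM_reduced_graphState, add_comm b a, reduced_graphState_apply,
      reduced_graphState_apply, add_comm b a]
    split_ifs
    · linear_combination ((2 ^ N : ℂ)⁻¹ * 2 ^ Fintype.card {i // i ∉ B}) ^ 2 *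
        parityChar ((a + b) ⬝ᵥ evenDegreeVec G B) *
          (parityChar (quadForm G (glue B b 0)) ^ 2 *
            parityChar_mul_self (quadForm G (glue B a 0)) +
              parityChar_mul_self (quadForm G (glue B b 0)))
    · simp
  simp only [trace, diag_apply, mul_apply, hterm, ← Finset.mul_sum]
  refine mul_eq_zero_of_right _ (Finset.sum_eq_zero fun a _ => ?_)
  exact (Equiv.sum_comp (Equiv.addLeft a) fun d =>
    parityChar (d ⬝ᵥ evenDegreeVec G B) * if biadjMatrix G B *ᵥ d = 0 then (1 : ℂ) else 0).trans
      (sum_parityChar_mul_ker_eq_zero _ _ h)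

lemma exists_vecMul_biadjMatrix_iff {A : Finset (Fin N)} (hdisj : Disjoint A B)
    (hunion : A ∪ B = Finset.univ) :
    (∃ x : {i // i ∈ A} → Fin 2, ∀ b : {i // i ∈ B},
        (∑ a : {i // i ∈ A}, if G.Adj b.1 a.1 then x a else 0) = evenDegreeVec G B b) ↔
      ∃ z, z ᵥ* biadjMatrix G B = evenDegreeVec G B := by
  have hAB (i : Fin N) : i ∈ A ↔ i ∉ B := by
    refine ⟨fun hA hB => Finset.disjoint_left.mp hdisj hA hB, fun hB => ?_⟩
    exact (Finset.mem_union.mp (hunion ▸ Finset.mem_univ i)).resolve_right hB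
  let e := Equiv.subtypeEquivRight hAB
  have hvecMul (z : {i // i ∉ B} → Fin 2) (b : {i // i ∈ B}) :
      (z ᵥ* biadjMatrix G B) b = ∑ a : {i // i ∈ A}, if G.Adj b.1 a.1 then z (e a) else 0 := by
    rw [vecMul, dotProduct, ← e.sum_comp]
    refine Finset.sum_congr rfl fun a _ => ?_
    simp [biadjMatrix, SimpleGraph.adjMatrix_apply, G.adj_comm, e]
  constructor
  · rintro ⟨x, hx⟩
    refine ⟨x ∘ e.symm, funext fun b => ?_⟩
    simp only [hvecMul, Function.comp_apply, Equiv.symm_apply_apply, hx]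
  · rintro ⟨z, hz⟩
    exact ⟨z ∘ e, fun b => by rw [← hz, hvecMul]; rfl⟩

end Criterion

theorem graph_state_fidelity_criterion_general
    (N : ℕ) (G : SimpleGraph (Fin N)) [DecidableRel G.Adj]
    (A B : Finset (Fin N))
    (hdisj : Disjoint A B) (hunion : A ∪ B = Finset.univ) :
    ((∃ x : {i : Fin N // i ∈ A} → Fin 2,
        ∀ b : {i : Fin N // i ∈ B},
          (∑ a : {i : Fin N // i ∈ A}, if G.Adj b.1 a.1 then x a else 0) =
            (if Even ((B.filter (fun c => G.Adj b.1 c)).card) then (1 : Fin 2) else 0)) →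
      fidelity (reduced B (graphState G)) (tildeM (reduced B (graphState G))) = 1) ∧
    (¬ (∃ x : {i : Fin N // i ∈ A} → Fin 2,
        ∀ b : {i : Fin N // i ∈ B},
          (∑ a : {i : Fin N // i ∈ A}, if G.Adj b.1 a.1 then x a else 0) =
            (if Even ((B.filter (fun c => G.Adj b.1 c)).card) then (1 : Fin 2) else 0)) →
      fidelity (reduced B (graphState G)) (tildeM (reduced B (graphState G))) = 0) := by
  have hsolv := exists_vecMul_biadjMatrix_iff G B hdisj hunion
  refine ⟨fun h => ?_, fun h => ?_⟩
  · rw [tildeM_reduced_graphState_eq_self G B (hsolv.mp h), fidelity_self (posSemidef_reduced B _),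
      trace_reduced, braket_graphState_self, Complex.one_re]
  · exact fidelity_eq_zero_of_trace_mul_eq_zero (posSemidef_reduced B _)
      (trace_mul_tildeM_reduced_graphState G B (mt hsolv.mpr h))

/-- Let `G` be a graph whose vertices are partitioned into nonempty sets
`A` and `B` with `|B|` even, let `G_B` be the reduced state of the graph state `|G⟩` on `B`
and `G̃_B = σ_y^{⊗N_B} G_B* σ_y^{⊗N_B}`. Then `F(G_B, G̃_B) = 1` if `Γ_BA x = D` is solvable
over `F₂` (where `Γ_BA` records the edges between `B` and `A`, and `D_b = 1` iff `b` has
even degree in the induced subgraph `G − A`), and `F(G_B, G̃_B) = 0` otherwise. -/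
theorem graph_state_fidelity_criterion
    (N : ℕ) (G : SimpleGraph (Fin N)) [DecidableRel G.Adj]
    (A B : Finset (Fin N)) (hA : A.Nonempty) (hB : B.Nonempty)
    (hdisj : Disjoint A B) (hunion : A ∪ B = Finset.univ)
    (hEven : Even B.card) :
    ((∃ x : {i : Fin N // i ∈ A} → Fin 2,
        ∀ b : {i : Fin N // i ∈ B},
          (∑ a : {i : Fin N // i ∈ A}, if G.Adj b.1 a.1 then x a else 0) =
            (if Even ((B.filter (fun c => G.Adj b.1 c)).card) then (1 : Fin 2) else 0)) →
      fidelity (reduced B (graphState G)) (tildeM (reduced B (graphState G))) = 1) ∧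
    (¬ (∃ x : {i : Fin N // i ∈ A} → Fin 2,
        ∀ b : {i : Fin N // i ∈ B},
          (∑ a : {i : Fin N // i ∈ A}, if G.Adj b.1 a.1 then x a else 0) =
            (if Even ((B.filter (fun c => G.Adj b.1 c)).card) then (1 : Fin 2) else 0)) →
      fidelity (reduced B (graphState G)) (tildeM (reduced B (graphState G))) = 0) :=
  graph_state_fidelity_criterion_general N G A B hdisj hunion

end QIpaper
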